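/- arXiv:2003.07807 — 3 statements merged into one kernel-verified Lean document; each statement's English description precedes it below -/
import Mathlib

section
/- Let χ be a standard mollifier on ℝᵈ supported in B₁(0) with unit integral, χ_ε(x) = ε^{-d} χ(x/ε), and for functions f write f_ε = f * χ_ε. For ρ ∈ L^∞(ℝᵈ) and u ∈ W^{1,1}_loc(ℝᵈ; ℝᵈ), the commutator R_ε := div((ρu)_ε) - div(ρ_ε u) satisfies, for a.e. x, R_ε(x) = -∫_{B₁(0)} ρ(x+εz) · ((u(x+εz)-u(x))/ε) · ∇χ(z) dz. -/
open MeasureTheory Set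
open scoped Convolution

/-- A standard mollifier on `ℝᵈ`: smooth, nonnegative, radially symmetric,
supported in `B₁(0)`, with unit integral. -/
def IsStdMollifier {d : ℕ} (χ : (Fin d → ℝ) → ℝ) : Prop :=
  ContDiff ℝ (⊤ : ℕ∞) χ ∧ (∀ x, 0 ≤ χ x) ∧ tsupport χ ⊆ Metric.ball 0 1 ∧
    (∀ x y : Fin d → ℝ, ‖x‖ = ‖y‖ → χ x = χ y) ∧ (∫ x, χ x) = 1

/-- Mollification at scale `ε`: `f_ε(x) = (f * χ_ε)(x)` with `χ_ε(y) = ε^{-d} χ(y/ε)`. -/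
noncomputable def mollify {d : ℕ} (χ : (Fin d → ℝ) → ℝ) (ε : ℝ)
    (f : (Fin d → ℝ) → ℝ) (x : Fin d → ℝ) : ℝ :=
  ∫ y, (1 / ε ^ d) * χ (ε⁻¹ • y) * f (x - y)

lemma IsStdMollifier.hcs {d : ℕ} {χ : (Fin d → ℝ) → ℝ} (hχ : IsStdMollifier χ) :
    HasCompactSupport χ :=
  (isCompact_closedBall (0 : Fin d → ℝ) 1).of_isClosed_subset (isClosed_tsupport χ)
    (hχ.2.2.1.trans Metric.ball_subset_closedBall)

lemma IsStdMollifier.odd {d : ℕ} {χ : (Fin d → ℝ) → ℝ} (hχ : IsStdMollifier χ)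
    (s v : Fin d → ℝ) : fderiv ℝ χ (-s) v = -(fderiv ℝ χ s v) := by
  have hd : Differentiable ℝ χ := hχ.1.differentiable (by simp)
  have h1 : HasFDerivAt (fun y : Fin d → ℝ => χ (-y))
      ((fderiv ℝ χ (-s)).comp (-(ContinuousLinearMap.id ℝ (Fin d → ℝ)))) s :=
    (hd (-s)).hasFDerivAt.comp s ((hasFDerivAt_id s).neg)
  have heq : (fun y : Fin d → ℝ => χ (-y)) = χ := funext fun y => hχ.2.2.2.1 _ _ (norm_neg y)
  rw [heq] at h1
  rw [h1.fderiv]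
  simp

lemma mollify_fderiv {d : ℕ} {χ : (Fin d → ℝ) → ℝ} (hχ : IsStdMollifier χ) {ε : ℝ} (hε : 0 < ε)
    {f : (Fin d → ℝ) → ℝ} (hf : LocallyIntegrable f) (x : Fin d → ℝ) (i : Fin d) :
    Integrable (fun z => fderiv ℝ χ z (Pi.single i 1) * f (x + ε • z)) ∧
    fderiv ℝ (mollify χ ε f) x (Pi.single i 1)
      = -(ε⁻¹ * ∫ z, fderiv ℝ χ z (Pi.single i 1) * f (x + ε • z)) := by
  have hχc : ContDiff ℝ (⊤ : ℕ∞) χ := hχ.1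
  set L : ℝ →L[ℝ] ℝ →L[ℝ] ℝ := ContinuousLinearMap.mul ℝ ℝ with hL
  set φ : (Fin d → ℝ) → ℝ := fun y => (1 / ε ^ d) * χ (ε⁻¹ • y) with hφdef
  have hεd : (0:ℝ) < ε ^ d := pow_pos hε d
  have hφsmooth : ContDiff ℝ (⊤ : ℕ∞) φ :=
    contDiff_const.mul (hχc.comp (contDiff_id.const_smul ε⁻¹))
  have hφcs : HasCompactSupport φ := by
    have hK : IsCompact ((fun z : Fin d → ℝ => ε • z) '' tsupport χ) :=
      hχ.hcs.image (continuous_const_smul ε)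
    refine hK.of_isClosed_subset (isClosed_tsupport φ) ?_
    refine closure_minimal ?_ hK.isClosed
    intro y hy
    have hy' : χ (ε⁻¹ • y) ≠ 0 := by
      intro h0; apply hy; simp [hφdef, h0]
    refine ⟨ε⁻¹ • y, subset_closure hy', ?_⟩
    show ε • ε⁻¹ • y = y
    rw [smul_smul, mul_inv_cancel₀ hε.ne', one_smul]
  have hmol : mollify χ ε f = φ ⋆[L] f := rfl
  -- derivative of the convolution
  have hfd := hφcs.hasFDerivAt_convolution_left L (hφsmooth.of_le (by simp)) hf x
  have hexist : Integrable
      (fun t => (L.precompL (Fin d → ℝ)) (fderiv ℝ φ t) (f (x - t))) :=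
    (hφcs.fderiv ℝ).convolutionExists_left (L := L.precompL (Fin d → ℝ))
      (hφsmooth.continuous_fderiv (by simp)) hf x
  -- pointwise derivative of φ
  have hφder : ∀ t, fderiv ℝ φ t (Pi.single i 1)
      = (1 / ε ^ d * ε⁻¹) * fderiv ℝ χ (ε⁻¹ • t) (Pi.single i 1) := by
    intro t
    have h1 : HasFDerivAt (fun y : Fin d → ℝ => ε⁻¹ • y)
        ((ε⁻¹ : ℝ) • ContinuousLinearMap.id ℝ (Fin d → ℝ)) t := (hasFDerivAt_id t).const_smul ε⁻¹
    have h2 : HasFDerivAt χ (fderiv ℝ χ (ε⁻¹ • t)) (ε⁻¹ • t) :=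
      (hχc.differentiable (by simp) (ε⁻¹ • t)).hasFDerivAt
    have h3 : HasFDerivAt (fun y : Fin d → ℝ => χ (ε⁻¹ • y))
        ((fderiv ℝ χ (ε⁻¹ • t)).comp ((ε⁻¹ : ℝ) • ContinuousLinearMap.id ℝ (Fin d → ℝ))) t :=
      h2.comp t h1
    have h4 := h3.const_mul (1 / ε ^ d)
    rw [h4.fderiv]
    simp [mul_assoc, smul_eq_mul]
  -- value of the derivative as an integral
  have happ : fderiv ℝ (mollify χ ε f) x (Pi.single i 1)
      = ∫ t, fderiv ℝ φ t (Pi.single i 1) * f (x - t) := by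
    rw [hmol, hfd.fderiv, convolution_def, ContinuousLinearMap.integral_apply hexist]
    rfl
  -- integrability, in several changes of variables
  have hInt1 : Integrable (fun t => fderiv ℝ φ t (Pi.single i 1) * f (x - t)) :=
    (ContinuousLinearMap.apply ℝ ℝ (Pi.single i 1)).integrable_comp hexist
  have hne : (1 / ε ^ d * ε⁻¹ : ℝ) ≠ 0 := by positivity
  have hInt2 : Integrable (fun t => fderiv ℝ χ (ε⁻¹ • t) (Pi.single i 1) * f (x - t)) := by
    have heq : (fun t => fderiv ℝ χ (ε⁻¹ • t) (Pi.single i 1) * f (x - t))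
        = fun t => (1 / ε ^ d * ε⁻¹)⁻¹ * (fderiv ℝ φ t (Pi.single i 1) * f (x - t)) := by
      funext t
      rw [hφder t, ← mul_assoc, ← mul_assoc, inv_mul_cancel₀ hne, one_mul]
    rw [heq]
    exact hInt1.const_mul _
  have hInt3 : Integrable (fun s => fderiv ℝ χ s (Pi.single i 1) * f (x - ε • s)) := by
    have h := hInt2.comp_smul (R := ε) hε.ne'
    simpa [smul_smul, inv_mul_cancel₀ hε.ne', one_smul] using h
  have hInt4 : Integrable (fun s => fderiv ℝ χ (-s) (Pi.single i 1) * f (x + ε • s)) := by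
    have h := (integrable_comp_sub_left
      (fun s => fderiv ℝ χ s (Pi.single i 1) * f (x - ε • s)) (0 : Fin d → ℝ)).2 hInt3
    simpa [zero_sub, smul_neg, sub_neg_eq_add] using h
  have hInt5 : Integrable (fun z => fderiv ℝ χ z (Pi.single i 1) * f (x + ε • z)) := by
    have heq : (fun z => fderiv ℝ χ z (Pi.single i 1) * f (x + ε • z))
        = fun z => -(fderiv ℝ χ (-z) (Pi.single i 1) * f (x + ε • z)) := by
      funext z; rw [hχ.odd]; ring
    rw [heq]
    exact hInt4.neg
  refine ⟨hInt5, ?_⟩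
  rw [happ]
  have hrw1 : ∫ t, fderiv ℝ φ t (Pi.single i 1) * f (x - t)
      = (1 / ε ^ d * ε⁻¹) * ∫ t, fderiv ℝ χ (ε⁻¹ • t) (Pi.single i 1) * f (x - t) := by
    simp_rw [hφder, mul_assoc]
    rw [integral_const_mul, integral_const_mul]

  have hcov : ∫ t, fderiv ℝ χ (ε⁻¹ • t) (Pi.single i 1) * f (x - t)
      = ε ^ d * ∫ s, fderiv ℝ χ s (Pi.single i 1) * f (x - ε • s) := by
    have h := MeasureTheory.Measure.integral_comp_smul (volume : Measure (Fin d → ℝ))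
      (fun t => fderiv ℝ χ (ε⁻¹ • t) (Pi.single i 1) * f (x - t)) ε
    simp only [Module.finrank_fin_fun, smul_smul, inv_mul_cancel₀ hε.ne', one_smul,
      smul_eq_mul, abs_of_pos (inv_pos.2 hεd)] at h
    rw [h, ← mul_assoc, mul_inv_cancel₀ hεd.ne', one_mul]
  have hneg : ∫ s, fderiv ℝ χ s (Pi.single i 1) * f (x - ε • s)
      = -∫ z, fderiv ℝ χ z (Pi.single i 1) * f (x + ε • z) := by
    have h := integral_neg_eq_self
      (fun s => fderiv ℝ χ s (Pi.single i 1) * f (x - ε • s)) volume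
    rw [← h, ← integral_neg]
    congr 1; funext s
    rw [smul_neg, sub_neg_eq_add, hχ.odd]; ring
  rw [hrw1, hcov, hneg]
  field_simp


/-- The DiPerna–Lions commutator representation: for `ρ ∈ L^∞` and `u ∈ W^{1,1}_loc`
(with `div u = 0`), the commutator `R_ε = div((ρu)_ε) - div(ρ_ε u)` satisfies, a.e.,
`R_ε(x) = -∫_{B₁(0)} ρ(x+εz) ((u(x+εz)-u(x))/ε) · ∇χ(z) dz`. -/
theorem stmt4 {d : ℕ} (χ : (Fin d → ℝ) → ℝ) (hχ : IsStdMollifier χ)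
    (ρ : (Fin d → ℝ) → ℝ) (u : (Fin d → ℝ) → (Fin d → ℝ))
    (hρmeas : Measurable ρ) (hρbdd : ∃ M, ∀ x, |ρ x| ≤ M)
    (humeas : Measurable u) (huloc : LocallyIntegrable u)
    -- `u ∈ W^{1,1}_loc`: `Du` is the (locally integrable) weak derivative of `u`
    (Du : (Fin d → ℝ) → Fin d → Fin d → ℝ)
    (hDuloc : LocallyIntegrable Du)
    (hweak : ∀ φ : (Fin d → ℝ) → ℝ, ContDiff ℝ (⊤ : ℕ∞) φ → HasCompactSupport φ →
      ∀ i j, (∫ x, u x i * fderiv ℝ φ x (Pi.single j 1)) = -∫ x, Du x i j * φ x)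
    -- `div u = 0` a.e., so that `div(ρ_ε u) = ∇ρ_ε · u`
    (hdiv : ∀ᵐ x, (∑ i, Du x i i) = 0) :
    ∀ ε > (0 : ℝ), ∀ᵐ x,
      ((∑ i, fderiv ℝ (mollify χ ε (fun y => ρ y * u y i)) x (Pi.single i 1))
          - ∑ i, fderiv ℝ (mollify χ ε ρ) x (Pi.single i 1) * u x i)
        = -∫ z in Metric.ball (0 : Fin d → ℝ) 1,
            ρ (x + ε • z) *
              ∑ i, ((u (x + ε • z) i - u x i) / ε) * fderiv ℝ χ z (Pi.single i 1) := by
  obtain ⟨M, hM⟩ := hρbdd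
  have hρloc : LocallyIntegrable ρ := by
    rw [locallyIntegrable_iff]
    intro K hK
    refine Integrable.mono' (g := fun _ => M) (integrableOn_const hK.measure_lt_top.ne)
      hρmeas.aestronglyMeasurable.restrict (ae_of_all _ fun y => ?_)
    simpa [Real.norm_eq_abs] using hM y
  have humeasi : ∀ i, Measurable fun y => u y i := fun i => (measurable_pi_apply i).comp humeas
  have huiloc : ∀ i, LocallyIntegrable fun y => u y i := by
    intro i
    rw [locallyIntegrable_iff]
    intro K hK
    exact (ContinuousLinearMap.proj (R := ℝ) (φ := fun _ : Fin d => ℝ) i).integrable_comp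
      (huloc.integrableOn_isCompact hK)
  have hρuloc : ∀ i, LocallyIntegrable fun y => ρ y * u y i := by
    intro i
    rw [locallyIntegrable_iff]
    intro K hK
    refine Integrable.mono' (((huiloc i).integrableOn_isCompact hK).norm.const_mul M)
      ((hρmeas.mul (humeasi i)).aestronglyMeasurable.restrict) (ae_of_all _ fun y => ?_)
    rw [Real.norm_eq_abs, abs_mul]
    exact mul_le_mul_of_nonneg_right (hM y) (abs_nonneg _)
  intro ε hε
  refine Filter.Eventually.of_forall fun x => ?_
  have hkey1 := fun i => mollify_fderiv hχ hε (hρuloc i) x i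
  have hkey2 := fun i => mollify_fderiv hχ hε hρloc x i
  -- the integrand of the RHS vanishes outside the unit ball
  have hsupp : ∀ z ∉ Metric.ball (0 : Fin d → ℝ) 1,
      ρ (x + ε • z) * ∑ i, ((u (x + ε • z) i - u x i) / ε) * fderiv ℝ χ z (Pi.single i 1) = 0 := by
    intro z hz
    have hz' : z ∉ tsupport χ := fun h => hz (hχ.2.2.1 h)
    have h0 : fderiv ℝ χ z = 0 := by
      by_contra hne0
      exact hz' (support_fderiv_subset ℝ (by simpa [Function.mem_support] using hne0))
    simp [h0]
  have hball : (∫ z in Metric.ball (0 : Fin d → ℝ) 1,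
        ρ (x + ε • z) * ∑ i, ((u (x + ε • z) i - u x i) / ε) * fderiv ℝ χ z (Pi.single i 1))
      = ∫ z, ρ (x + ε • z) *
          ∑ i, ((u (x + ε • z) i - u x i) / ε) * fderiv ℝ χ z (Pi.single i 1) :=
    setIntegral_eq_integral_of_forall_compl_eq_zero hsupp
  -- per-index integrability and integral computation
  have heqi : ∀ i : Fin d, (fun z => ρ (x + ε • z) *
        (((u (x + ε • z) i - u x i) / ε) * fderiv ℝ χ z (Pi.single i 1)))
      = fun z => ε⁻¹ * ((fderiv ℝ χ z (Pi.single i 1) * (ρ (x + ε • z) * u (x + ε • z) i))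
          - u x i * (fderiv ℝ χ z (Pi.single i 1) * ρ (x + ε • z))) := by
    intro i; funext z; field_simp
  have hgint : ∀ i : Fin d, Integrable (fun z => ρ (x + ε • z) *
      (((u (x + ε • z) i - u x i) / ε) * fderiv ℝ χ z (Pi.single i 1))) := by
    intro i
    rw [heqi i]
    exact ((hkey1 i).1.sub ((hkey2 i).1.const_mul _)).const_mul _
  have hterm : ∀ i : Fin d, (∫ z, ρ (x + ε • z) *
        (((u (x + ε • z) i - u x i) / ε) * fderiv ℝ χ z (Pi.single i 1)))
      = ε⁻¹ * ((∫ z, fderiv ℝ χ z (Pi.single i 1) * (ρ (x + ε • z) * u (x + ε • z) i))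
          - u x i * ∫ z, fderiv ℝ χ z (Pi.single i 1) * ρ (x + ε • z)) := by
    intro i
    rw [heqi i, integral_const_mul,
      integral_sub (hkey1 i).1 ((hkey2 i).1.const_mul _), integral_const_mul]
  have hsum : (∫ z, ρ (x + ε • z) *
        ∑ i, ((u (x + ε • z) i - u x i) / ε) * fderiv ℝ χ z (Pi.single i 1))
      = ∑ i, ∫ z, ρ (x + ε • z) *
          (((u (x + ε • z) i - u x i) / ε) * fderiv ℝ χ z (Pi.single i 1)) := by
    simp_rw [Finset.mul_sum]
    exact integral_finset_sum _ fun i _ => hgint i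
  have e1 : ∀ i : Fin d, fderiv ℝ (mollify χ ε fun y => ρ y * u y i) x (Pi.single i 1)
      = -(ε⁻¹ * ∫ z, fderiv ℝ χ z (Pi.single i 1) * (ρ (x + ε • z) * u (x + ε • z) i)) :=
    fun i => (hkey1 i).2
  have e2 : ∀ i : Fin d, fderiv ℝ (mollify χ ε ρ) x (Pi.single i 1)
      = -(ε⁻¹ * ∫ z, fderiv ℝ χ z (Pi.single i 1) * ρ (x + ε • z)) :=
    fun i => (hkey2 i).2
  rw [hball, hsum]
  simp_rw [e1, e2, hterm]
  rw [← Finset.sum_neg_distrib, ← Finset.sum_sub_distrib]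
  refine Finset.sum_congr rfl fun i _ => by ring
end

section
/- Let w ∈ ℝ³ with |w| ≥ 1 and consider U = (0, 0, w) ∈ ℝ^{3×3} (rows m, u, w). Then with U₊ = (w, w, w), U₋ = (-w, -w, w), U₁ = ((1+3√(2/3))w, w, (1+3√(2/3))² w), U₂ = (-3(1+√(2/3))w, -3w, -3(1+√(2/3))² w), one has: U = ½U₋ + ½U₊, U₋ = ½U₁ + ½U₂, the differences U₊ - U₋, U₂ - U₁ each have rank at most 2, and each of U₊, U₁, U₂ lies in the constitutive set K_C = {(ρv, v, ρ²v) : 1/C ≤ |v| ≤ C, 1/C ≤ ρ ≤ C} for sufficiently large C > 1 depending only on |w|. -/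
/-!
Every matrix involved has all its rows proportional to `w`, so each difference is a rank-one
matrix `vecMulVec ![a, b, c] w`, and both splittings reduce to identities between the scalar
coefficients; the second one is exactly the pair of relations `-ρ₁ + 3ρ₂ = 2`,
`-ρ₁² + 3ρ₂² = -2` satisfied by `ρ₁ = 1 + 3√(2/3)` and `ρ₂ = 1 + √(2/3)`.
The matrices `U₊, U₁, U₂` are `(ρv, v, ρ²v)` for `(ρ, v) = (1, w), (ρ₁, w), (ρ₂, -3w)`,
with `1 ≤ ρ ≤ 4` and `1 ≤ |v| ≤ 3|w|`, so `C = 4|w|` works.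
-/

open Matrix

def rowsMat (m u w : Fin 3 → ℝ) : Matrix (Fin 3) (Fin 3) ℝ := Matrix.of ![m, u, w]

noncomputable def enorm3 (v : Fin 3 → ℝ) : ℝ := Real.sqrt (∑ i, (v i) ^ 2)

def Kset (C : ℝ) : Set (Matrix (Fin 3) (Fin 3) ℝ) :=
  {A | ∃ (ρ : ℝ) (v : Fin 3 → ℝ), 1 / C ≤ ρ ∧ ρ ≤ C ∧ 1 / C ≤ enorm3 v ∧ enorm3 v ≤ C ∧
    A = rowsMat (ρ • v) v ((ρ ^ 2) • v)}

lemma rowsMat_add (m u w m' u' w' : Fin 3 → ℝ) :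
    rowsMat m u w + rowsMat m' u' w' = rowsMat (m + m') (u + u') (w + w') := by
  ext i j; fin_cases i <;> rfl

lemma rowsMat_sub (m u w m' u' w' : Fin 3 → ℝ) :
    rowsMat m u w - rowsMat m' u' w' = rowsMat (m - m') (u - u') (w - w') := by
  ext i j; fin_cases i <;> rfl

lemma smul_rowsMat (c : ℝ) (m u w : Fin 3 → ℝ) :
    c • rowsMat m u w = rowsMat (c • m) (c • u) (c • w) := by
  ext i j; fin_cases i <;> rfl

lemma rowsMat_smul_eq_vecMulVec (a b c : ℝ) (v : Fin 3 → ℝ) :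
    rowsMat (a • v) (b • v) (c • v) = vecMulVec ![a, b, c] v := by
  ext i j; fin_cases i <;> rfl

lemma rank_sub_rowsMat_smul_le (a b c a' b' c' : ℝ) (v : Fin 3 → ℝ) :
    (rowsMat (a • v) (b • v) (c • v) - rowsMat (a' • v) (b' • v) (c' • v)).rank ≤ 1 := by
  rw [rowsMat_sub, ← sub_smul, ← sub_smul, ← sub_smul, rowsMat_smul_eq_vecMulVec]
  exact rank_vecMulVec_le _ _

lemma enorm3_smul (c : ℝ) (v : Fin 3 → ℝ) : enorm3 (c • v) = |c| * enorm3 v := by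
  simp only [enorm3, Pi.smul_apply, smul_eq_mul, mul_pow, ← Finset.mul_sum]
  rw [Real.sqrt_mul (sq_nonneg c), Real.sqrt_sq_eq_abs]

lemma rowsMat_mem_Kset {C ρ : ℝ} {v : Fin 3 → ℝ} (hρ : 1 ≤ ρ) (hρC : ρ ≤ C)
    (hv : 1 ≤ enorm3 v) (hvC : enorm3 v ≤ C) : rowsMat (ρ • v) v (ρ ^ 2 • v) ∈ Kset C := by
  have hC : 1 / C ≤ 1 := div_le_one_of_le₀ (by linarith) (by linarith)
  exact ⟨ρ, v, hC.trans hρ, hρC, hC.trans hv, hvC, rfl⟩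

lemma rowsMat_mul_smul (ρ c : ℝ) (v : Fin 3 → ℝ) :
    rowsMat ((c * ρ) • v) (c • v) ((c * ρ ^ 2) • v) =
      rowsMat (ρ • c • v) (c • v) (ρ ^ 2 • c • v) := by
  simp only [smul_smul, mul_comm]

lemma rowsMat_zero_split (w : Fin 3 → ℝ) :
    rowsMat 0 0 w = (1 / 2 : ℝ) • rowsMat (-w) (-w) w + (1 / 2 : ℝ) • rowsMat w w w := by
  simp only [smul_rowsMat, rowsMat_add]
  congr 1 <;> module

lemma rowsMat_neg_split {ρ₁ ρ₂ : ℝ} (h₁ : -ρ₁ + 3 * ρ₂ = 2) (h₂ : -ρ₁ ^ 2 + 3 * ρ₂ ^ 2 = -2)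
    (w : Fin 3 → ℝ) :
    rowsMat (-w) (-w) w = (1 / 2 : ℝ) • rowsMat (ρ₁ • w) w (ρ₁ ^ 2 • w) +
      (1 / 2 : ℝ) • rowsMat ((-3 * ρ₂) • w) ((-3 : ℝ) • w) ((-3 * ρ₂ ^ 2) • w) := by
  simp only [smul_rowsMat, rowsMat_add]
  congr 1
  · linear_combination (norm := module) (1 / 2 : ℝ) • h₁ • w
  · module
  · linear_combination (norm := module) (1 / 2 : ℝ) • h₂ • w

/-- The geometric decomposition lemma: for `|w| ≥ 1`, `U = (0,0,w)` splits as
`U = ½U₋ + ½U₊`, `U₋ = ½U₁ + ½U₂`, with rank-2 connections, and `U₊, U₁, U₂ ∈ K_C`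
for some `C > 1`. -/
theorem stmt15 (w : Fin 3 → ℝ) (hw : 1 ≤ enorm3 w) :
    let s : ℝ := Real.sqrt (2 / 3)
    let U : Matrix (Fin 3) (Fin 3) ℝ := rowsMat 0 0 w
    let Uplus := rowsMat w w w
    let Uminus := rowsMat (-w) (-w) w
    let U₁ := rowsMat ((1 + 3 * s) • w) w (((1 + 3 * s) ^ 2) • w)
    let U₂ := rowsMat ((-3 * (1 + s)) • w) (((-3 : ℝ)) • w) ((-3 * (1 + s) ^ 2) • w)
    U = (1 / 2 : ℝ) • Uminus + (1 / 2 : ℝ) • Uplus ∧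
    Uminus = (1 / 2 : ℝ) • U₁ + (1 / 2 : ℝ) • U₂ ∧
    (Uplus - Uminus).rank ≤ 2 ∧ (U₂ - U₁).rank ≤ 2 ∧
    ∃ C : ℝ, 1 < C ∧ Uplus ∈ Kset C ∧ U₁ ∈ Kset C ∧ U₂ ∈ Kset C := by
  intro s U Uplus Uminus U₁ U₂
  have hs0 : 0 ≤ s := Real.sqrt_nonneg _
  have hs2 : s ^ 2 = 2 / 3 := Real.sq_sqrt (by norm_num)
  have hs1 : s ≤ 1 := by nlinarith
  have hv₂ : enorm3 ((-3 : ℝ) • w) = 3 * enorm3 w := by rw [enorm3_smul]; norm_num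
  refine ⟨rowsMat_zero_split w, rowsMat_neg_split (by ring) (by linear_combination -6 * hs2) w,
    ?_, ?_, 4 * enorm3 w, by linarith, ?_, ?_, ?_⟩
  · have h := rank_sub_rowsMat_smul_le 1 1 1 (-1) (-1) 1 w
    simp only [one_smul, neg_one_smul] at h
    exact h.trans one_le_two
  · have h := rank_sub_rowsMat_smul_le (-3 * (1 + s)) (-3) (-3 * (1 + s) ^ 2) (1 + 3 * s) 1
      ((1 + 3 * s) ^ 2) w
    rw [one_smul] at h
    exact h.trans one_le_two
  · simpa only [one_smul, one_pow] using
      rowsMat_mem_Kset (ρ := 1) (C := 4 * enorm3 w) le_rfl (by linarith) hw (by linarith)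
  · exact rowsMat_mem_Kset (by linarith) (by linarith) hw (by linarith)
  · rw [show U₂ = _ from rowsMat_mul_smul (1 + s) (-3) w]
    exact rowsMat_mem_Kset (by linarith) (by linarith) (by linarith) (by linarith)
end

section
/- Let p ∈ C²([a,b]) with a,b ∈ ℝ, a < b, and let ρ : ℝᵈ → [a,b] be measurable. Let χ_ε be a standard mollifier and ρ_ε = ρ * χ_ε (note a ≤ ρ_ε ≤ b). Then for a.e. x, |p(ρ_ε(x)) - (p∘ρ)_ε(x)| ≤ ‖p''‖_{C⁰([a,b])} · ((ρ²)_ε(x) - (ρ_ε(x))² + (ρ_ε(x) - ρ(x))²). -/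
open MeasureTheory Set

private lemma taylor_aux {a b : ℝ} (hab : a < b) {p : ℝ → ℝ}
    (hp : ContDiffOn ℝ 2 p (Icc a b)) {M : ℝ}
    (hM : ∀ s ∈ Icc a b, |iteratedDerivWithin 2 p (Icc a b) s| ≤ M) :
    ∀ s ∈ Icc a b, ∀ t ∈ Icc a b,
      |p t - p s - derivWithin p (Icc a b) s * (t - s)| ≤ M * (t - s) ^ 2 := by
  set p' := derivWithin p (Icc a b) with hp'def
  set p'' := derivWithin p' (Icc a b) with hp''def
  have hud : UniqueDiffOn ℝ (Icc a b) := uniqueDiffOn_Icc hab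
  have h1 : ∀ u ∈ Icc a b, HasDerivWithinAt p (p' u) (Icc a b) u := fun u hu =>
    (hp.differentiableOn two_ne_zero u hu).hasDerivWithinAt
  have hp'c : ContDiffOn ℝ 1 p' (Icc a b) := hp.derivWithin hud (by norm_num)
  have h2 : ∀ u ∈ Icc a b, HasDerivWithinAt p' (p'' u) (Icc a b) u := fun u hu =>
    (hp'c.differentiableOn one_ne_zero u hu).hasDerivWithinAt
  have hM' : ∀ u ∈ Icc a b, |p'' u| ≤ M := by
    intro u hu
    have : iteratedDerivWithin 2 p (Icc a b) u = p'' u := by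
      rw [iteratedDerivWithin_succ, hp''def, hp'def]
      exact derivWithin_congr
        (fun v hv => congrFun iteratedDerivWithin_one v)
        (congrFun iteratedDerivWithin_one u)
    rw [← this]; exact hM u hu
  have hlip : ∀ u ∈ Icc a b, ∀ v ∈ Icc a b, |p' v - p' u| ≤ M * |v - u| := by
    intro u hu v hv
    have := (convex_Icc a b).norm_image_sub_le_of_norm_hasDerivWithin_le h2
      (fun w hw => by simpa using hM' w hw) hu hv
    simpa [Real.norm_eq_abs] using this
  intro s hs t ht
  have hsub : uIcc s t ⊆ Icc a b := uIcc_subset_Icc hs ht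
  set q : ℝ → ℝ := fun u => p u - p' s * u with hq
  have hqd : ∀ u ∈ uIcc s t, HasDerivWithinAt q (p' u - p' s) (uIcc s t) u := by
    intro u hu
    have h := ((h1 u (hsub hu)).mono hsub).sub
      (((hasDerivWithinAt_id u (uIcc s t)).const_mul (p' s)))
    simp only [mul_one] at h; exact h
  have hbound : ∀ u ∈ uIcc s t, ‖p' u - p' s‖ ≤ M * |t - s| := by
    intro u hu
    have h1' : |p' u - p' s| ≤ M * |u - s| := hlip s hs u (hsub hu)
    have hM0 : 0 ≤ M := le_trans (abs_nonneg _) (hM a ⟨le_refl a, hab.le⟩)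
    have h2' : |u - s| ≤ |t - s| := by
      rcases Set.mem_uIcc.1 hu with ⟨h3, h4⟩ | ⟨h3, h4⟩ <;>
      · have := le_abs_self (t - s); have := neg_le_abs (t - s)
        rw [abs_sub_le_iff]; constructor <;> linarith
    calc |p' u - p' s| ≤ M * |u - s| := h1'
      _ ≤ M * |t - s| := by nlinarith
  have := (convex_uIcc s t).norm_image_sub_le_of_norm_hasDerivWithin_le hqd hbound
    (left_mem_uIcc) (right_mem_uIcc)
  have heq : q t - q s = p t - p s - p' s * (t - s) := by rw [hq]; ring
  rw [Real.norm_eq_abs, Real.norm_eq_abs, heq] at this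
  calc |p t - p s - p' s * (t - s)| ≤ M * |t - s| * |t - s| := this
    _ = M * (t - s) ^ 2 := by rw [mul_assoc, abs_mul_abs_self]; ring

/-- Taylor-expansion commutator estimate: for `p ∈ C²([a,b])` with `|p''| ≤ M` on `[a,b]`
and `ρ` taking values in `[a,b]`,
`|p(ρ_ε) - (p∘ρ)_ε| ≤ M·((ρ²)_ε - ρ_ε² + (ρ_ε - ρ)²)` a.e. -/
theorem stmt16 {d : ℕ} (a b : ℝ) (hab : a < b)
    (p : ℝ → ℝ) (hp : ContDiffOn ℝ 2 p (Icc a b))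
    (M : ℝ) (hM : ∀ s ∈ Icc a b, |iteratedDerivWithin 2 p (Icc a b) s| ≤ M)
    (ρ : (Fin d → ℝ) → ℝ) (hρmeas : Measurable ρ) (hρrange : ∀ x, ρ x ∈ Icc a b)
    (χ : (Fin d → ℝ) → ℝ) (hχ : IsStdMollifier χ) :
    ∀ ε > (0 : ℝ), ∀ᵐ x,
      |p (mollify χ ε ρ x) - mollify χ ε (fun y => p (ρ y)) x|
        ≤ M * ((mollify χ ε (fun y => (ρ y) ^ 2) x - (mollify χ ε ρ x) ^ 2)
            + (mollify χ ε ρ x - ρ x) ^ 2) := by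

  obtain ⟨hχsm, hχpos, hχsupp, -, hχint⟩ := hχ
  intro ε hε
  set K : (Fin d → ℝ) → ℝ := fun y => (1 / ε ^ d) * χ (ε⁻¹ • y) with hKdef
  have hKpos : ∀ y, 0 ≤ K y := fun y => by
    have := hχpos (ε⁻¹ • y); positivity
  have hKcont : Continuous K :=
    continuous_const.mul (hχsm.continuous.comp (continuous_const_smul ε⁻¹))
  have hKsupp : HasCompactSupport K := by
    apply HasCompactSupport.intro (isCompact_closedBall (0 : Fin d → ℝ) ε)
    intro y hy
    have hy' : ε < ‖y‖ := by
      simpa [Metric.mem_closedBall, dist_zero_right, not_le] using hy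
    have : ε⁻¹ • y ∉ tsupport χ := by
      intro h
      have := hχsupp h
      rw [Metric.mem_ball, dist_zero_right, norm_smul] at this
      rw [Real.norm_eq_abs, abs_of_pos (inv_pos.2 hε)] at this
      have h2 := mul_lt_mul_of_pos_left this hε
      rw [mul_one, ← mul_assoc, mul_inv_cancel₀ hε.ne', one_mul] at h2
      linarith
    have : χ (ε⁻¹ • y) = 0 := image_eq_zero_of_notMem_tsupport this
    simp [hKdef, this]
  have hKint : Integrable K := hKcont.integrable_of_hasCompactSupport hKsupp
  have hKone : ∫ y, K y = 1 := by
    rw [hKdef]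
    rw [MeasureTheory.integral_const_mul]
    rw [MeasureTheory.Measure.integral_comp_inv_smul_of_nonneg volume χ hε.le]
    rw [hχint]
    simp [Module.finrank_fin_fun]
    field_simp
  have hM0 : 0 ≤ M := le_trans (abs_nonneg _) (hM a ⟨le_refl a, hab.le⟩)
  set p' := derivWithin p (Icc a b) with hp'def
  have hp' : ∀ s ∈ Icc a b, ∀ t ∈ Icc a b,
      |p t - p s - p' s * (t - s)| ≤ M * (t - s) ^ 2 := taylor_aux hab hp hM
  obtain ⟨C, hC⟩ := isCompact_Icc.exists_bound_of_continuousOn hp.continuousOn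
  have hpmeas : Measurable (fun y => p (ρ y)) := by
    have h1 : Measurable (fun y => (⟨ρ y, hρrange y⟩ : Icc a b)) := hρmeas.subtype_mk
    exact (continuousOn_iff_continuous_restrict.1 hp.continuousOn).measurable.comp h1
  refine ae_of_all _ fun x => ?_
  have key : ∀ (g : (Fin d → ℝ) → ℝ), Measurable g → (∃ Cg, ∀ y, |g y| ≤ Cg) →
      Integrable (fun y => K y * g (x - y)) := by
    rintro g hg ⟨Cg, hCg⟩
    have h1 : AEStronglyMeasurable (fun y => g (x - y)) volume :=
      (hg.comp (measurable_const.sub measurable_id)).aestronglyMeasurable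
    have h2 := hKint.bdd_mul h1 (c := Cg) (ae_of_all _ fun y => by simpa [Real.norm_eq_abs] using hCg (x - y))
    simpa [mul_comm] using h2
  have hρbd : ∀ y, |ρ y| ≤ |a| + |b| := by
    intro y
    have h := hρrange y
    have h1 := neg_abs_le a; have h2 := le_abs_self b
    have h3 := abs_nonneg a; have h4 := abs_nonneg b
    rw [abs_le]; exact ⟨by linarith [h.1], by linarith [h.2]⟩
  have Iρ : Integrable (fun y => K y * ρ (x - y)) := key ρ hρmeas ⟨_, hρbd⟩
  have Ip : Integrable (fun y => K y * p (ρ (x - y))) :=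
    key _ hpmeas ⟨C, fun y => by simpa [Real.norm_eq_abs] using hC (ρ y) (hρrange y)⟩
  have Iρ2 : Integrable (fun y => K y * (ρ (x - y)) ^ 2) := by
    refine key _ (hρmeas.pow_const 2) ⟨(|a| + |b|) ^ 2, fun y => ?_⟩
    rw [abs_pow]
    exact pow_le_pow_left₀ (abs_nonneg _) (hρbd y) 2
  set m := ∫ y, K y * ρ (x - y) with hmdef
  have hmol : mollify χ ε ρ x = m := rfl
  have hmolp : mollify χ ε (fun y => p (ρ y)) x = ∫ y, K y * p (ρ (x - y)) := rfl
  have hmolρ2 : mollify χ ε (fun y => (ρ y) ^ 2) x = ∫ y, K y * (ρ (x - y)) ^ 2 := rfl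
  have hmem : m ∈ Icc a b := by
    constructor
    · have h1 : ∫ y, K y * a = a := by
        rw [MeasureTheory.integral_mul_const, hKone, one_mul]
      rw [← h1, hmdef]
      exact integral_mono (hKint.mul_const a) Iρ fun y =>
        mul_le_mul_of_nonneg_left (hρrange _).1 (hKpos y)
    · have h1 : ∫ y, K y * b = b := by
        rw [MeasureTheory.integral_mul_const, hKone, one_mul]
      rw [← h1, hmdef]
      exact integral_mono Iρ (hKint.mul_const b) fun y =>
        mul_le_mul_of_nonneg_left (hρrange _).2 (hKpos y)
  have hid : p m - (∫ y, K y * p (ρ (x - y)))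
      = ∫ y, K y * (p m + p' m * (ρ (x - y) - m) - p (ρ (x - y))) := by
    have hexp : (fun y => K y * (p m + p' m * (ρ (x - y) - m) - p (ρ (x - y))))
        = fun y => ((p m - p' m * m) * K y + p' m * (K y * ρ (x - y)))
            - K y * p (ρ (x - y)) := by funext y; ring
    have IA1 : Integrable (fun y => (p m - p' m * m) * K y) := hKint.const_mul _
    have IA2 : Integrable (fun y => p' m * (K y * ρ (x - y))) := Iρ.const_mul _
    have IA : Integrable (fun y => (p m - p' m * m) * K y + p' m * (K y * ρ (x - y))) :=
      IA1.add IA2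
    have e1 : ∫ y, (p m - p' m * m) * K y = (p m - p' m * m) * ∫ y, K y :=
      MeasureTheory.integral_const_mul _ _
    have e2 : ∫ y, p' m * (K y * ρ (x - y)) = p' m * ∫ y, K y * ρ (x - y) :=
      MeasureTheory.integral_const_mul _ _
    rw [hexp, integral_sub IA Ip, integral_add IA1 IA2, e1, e2, hKone, ← hmdef]
    ring
  have hvar : ∫ y, K y * (M * (ρ (x - y) - m) ^ 2)
      = M * ((∫ y, K y * (ρ (x - y)) ^ 2) - m ^ 2) := by
    have hexp : (fun y => K y * (M * (ρ (x - y) - m) ^ 2))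
        = fun y => (M * (K y * (ρ (x - y)) ^ 2) - (2 * M * m) * (K y * ρ (x - y)))
            + (M * m ^ 2) * K y := by funext y; ring
    have IB1 : Integrable (fun y => M * (K y * (ρ (x - y)) ^ 2)) := Iρ2.const_mul _
    have IB2 : Integrable (fun y => (2 * M * m) * (K y * ρ (x - y))) := Iρ.const_mul _
    have IB3 : Integrable (fun y => (M * m ^ 2) * K y) := hKint.const_mul _
    have IB : Integrable (fun y => M * (K y * (ρ (x - y)) ^ 2)
        - (2 * M * m) * (K y * ρ (x - y))) := IB1.sub IB2
    have e3 : ∫ y, M * (K y * (ρ (x - y)) ^ 2) = M * ∫ y, K y * (ρ (x - y)) ^ 2 :=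
      MeasureTheory.integral_const_mul _ _
    have e4 : ∫ y, (2 * M * m) * (K y * ρ (x - y)) = (2 * M * m) * ∫ y, K y * ρ (x - y) :=
      MeasureTheory.integral_const_mul _ _
    have e5 : ∫ y, (M * m ^ 2) * K y = (M * m ^ 2) * ∫ y, K y :=
      MeasureTheory.integral_const_mul _ _
    rw [hexp, integral_add IB IB3, integral_sub IB1 IB2, e3, e4, e5, hKone, ← hmdef]
    ring
  have hInt2 : Integrable (fun y => K y * (M * (ρ (x - y) - m) ^ 2)) := by
    refine (((Iρ2.const_mul M).sub (Iρ.const_mul (2 * M * m))).add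
      (hKint.const_mul (M * m ^ 2))).congr (ae_of_all _ fun y => ?_)
    simp only [Pi.add_apply, Pi.sub_apply]
    ring
  have hbd : |p m - ∫ y, K y * p (ρ (x - y))|
      ≤ ∫ y, K y * (M * (ρ (x - y) - m) ^ 2) := by
    rw [hid]
    have h : ‖∫ y, K y * (p m + p' m * (ρ (x - y) - m) - p (ρ (x - y)))‖
        ≤ ∫ y, K y * (M * (ρ (x - y) - m) ^ 2) := by
      refine MeasureTheory.norm_integral_le_of_norm_le hInt2 (ae_of_all _ fun y => ?_)
      rw [Real.norm_eq_abs, abs_mul, abs_of_nonneg (hKpos y)]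
      refine mul_le_mul_of_nonneg_left ?_ (hKpos y)
      have heq : p m + p' m * (ρ (x - y) - m) - p (ρ (x - y))
          = -(p (ρ (x - y)) - p m - p' m * (ρ (x - y) - m)) := by ring
      rw [heq, abs_neg]
      exact hp' m hmem _ (hρrange _)
    simpa [Real.norm_eq_abs] using h
  rw [hmol, hmolp, hmolρ2]
  have hfin : M * ((∫ y, K y * (ρ (x - y)) ^ 2) - m ^ 2)
      ≤ M * (((∫ y, K y * (ρ (x - y)) ^ 2) - m ^ 2) + (m - ρ x) ^ 2) := by
    nlinarith [sq_nonneg (m - ρ x)]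
  calc |p m - ∫ y, K y * p (ρ (x - y))|
      ≤ ∫ y, K y * (M * (ρ (x - y) - m) ^ 2) := hbd
    _ = M * ((∫ y, K y * (ρ (x - y)) ^ 2) - m ^ 2) := hvar
    _ ≤ _ := hfin
end
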